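/- arXiv:1604.02725 — 3 statements merged into one kernel-verified Lean document; each statement's English description precedes it below -/
import Mathlib

section
/- If G is a group and H is a finite-index subgroup of G, and f is a real-valued function on groups satisfying f(K) ≤ [L:K]·f(L) for every group L and finite-index subgroup K ≤ L, then the function f̃(G) = inf { f(K)/[G:K] : K a finite-index subgroup of G } satisfies f̃(H) = [G:H]·f̃(G). -/
/-- Wall's infimum construction is a generalised Euler characteristic:
if `f` is a nonnegative real-valued function on the subgroups of `G` satisfying
`f K ≤ [L:K] * f L` for every finite-index inclusion `K ≤ L`, then
`f̃(H) = [G:H] * f̃(G)` for every finite-index subgroup `H` of `G`, where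
`f̃` is the infimum of `f(K)/[·:K]` over finite-index subgroups `K`. -/
theorem wall_infimum_euler_characteristic {G : Type*} [Group G]
    (f : Subgroup G → ℝ) (hf0 : ∀ K : Subgroup G, 0 ≤ f K)
    (hf : ∀ L K : Subgroup G, K ≤ L → K.relIndex L ≠ 0 →
      f K ≤ (K.relIndex L : ℝ) * f L)
    (H : Subgroup G) (hH : H.index ≠ 0) :
    sInf {x : ℝ | ∃ K : Subgroup G, K ≤ H ∧ K.relIndex H ≠ 0 ∧ x = f K / (K.relIndex H : ℝ)}
      = (H.index : ℝ) *
        sInf {x : ℝ | ∃ K : Subgroup G, K.index ≠ 0 ∧ x = f K / (K.index : ℝ)} := by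
  set A : Set ℝ :=
    {x : ℝ | ∃ K : Subgroup G, K ≤ H ∧ K.relIndex H ≠ 0 ∧ x = f K / (K.relIndex H : ℝ)} with hA
  set B : Set ℝ := {x : ℝ | ∃ K : Subgroup G, K.index ≠ 0 ∧ x = f K / (K.index : ℝ)} with hB
  have hAne : A.Nonempty := ⟨f H / ((H.relIndex H : ℕ) : ℝ), H, le_rfl, by
    rw [Subgroup.relIndex_self]; exact one_ne_zero, rfl⟩
  have hBne : B.Nonempty := ⟨f ⊤ / ((⊤ : Subgroup G).index : ℝ), ⊤, by
    rw [Subgroup.index_top]; exact one_ne_zero, rfl⟩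
  have hAbdd : BddBelow A := ⟨0, by
    rintro x ⟨K, _, hK, rfl⟩
    exact div_nonneg (hf0 K) (Nat.cast_nonneg _)⟩
  have hBbdd : BddBelow B := ⟨0, by
    rintro x ⟨K, _, rfl⟩
    exact div_nonneg (hf0 K) (Nat.cast_nonneg _)⟩
  have hHpos : (0 : ℝ) < (H.index : ℝ) := by positivity
  apply le_antisymm
  · -- sInf A ≤ H.index * sInf B
    have key : ∀ b ∈ B, sInf A / (H.index : ℝ) ≤ b := by
      rintro b ⟨K, hK, rfl⟩
      haveI : K.FiniteIndex := ⟨hK⟩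
      set K' := K ⊓ H with hK'
      have hle : K' ≤ H := inf_le_right
      have hrel : K'.relIndex H = K.relIndex H := Subgroup.inf_relIndex_right K H
      have hrelne : K.relIndex H ≠ 0 := Subgroup.FiniteIndex.index_ne_zero
      have hrelne' : K'.relIndex H ≠ 0 := hrel ▸ hrelne
      have hK'idx : K'.index = K'.relIndex H * H.index :=
        (Subgroup.relIndex_mul_index hle).symm
      have hK'ne : K'.index ≠ 0 := by
        rw [hK'idx]; exact mul_ne_zero hrelne' hH
      have hK'relK : K'.relIndex K ≠ 0 := by
        intro h
        have := Subgroup.relIndex_mul_index (inf_le_left : K' ≤ K)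
        rw [h, zero_mul] at this
        exact hK'ne this.symm
      have hfK' : f K' ≤ (K'.relIndex K : ℝ) * f K :=
        hf K K' inf_le_left hK'relK
      have hmem : f K' / (K'.relIndex H : ℝ) ∈ A := ⟨K', hle, hrelne', rfl⟩
      have h1 : sInf A ≤ f K' / (K'.relIndex H : ℝ) := csInf_le hAbdd hmem
      have hidx : (K'.relIndex K : ℝ) * (K.index : ℝ) = (K'.index : ℝ) := by
        rw [← Nat.cast_mul, Subgroup.relIndex_mul_index (inf_le_left : K' ≤ K)]
      have hidx2 : (K'.relIndex H : ℝ) * (H.index : ℝ) = (K'.index : ℝ) := by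
        rw [← Nat.cast_mul, Subgroup.relIndex_mul_index hle]
      have hKpos : (0 : ℝ) < (K.index : ℝ) := by positivity
      have hrelpos : (0 : ℝ) < (K'.relIndex H : ℝ) := by positivity
      rw [div_le_div_iff₀ hHpos hKpos]
      have s1 : sInf A * (K.index : ℝ) ≤ f K' / (K'.relIndex H : ℝ) * (K.index : ℝ) :=
        mul_le_mul_of_nonneg_right h1 hKpos.le
      have s3 : f K' * (K.index : ℝ) ≤ f K * (K'.index : ℝ) := by
        calc f K' * (K.index : ℝ) ≤ (K'.relIndex K : ℝ) * f K * (K.index : ℝ) :=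
              mul_le_mul_of_nonneg_right hfK' hKpos.le
          _ = f K * (K'.index : ℝ) := by rw [← hidx]; ring
      have s4 : f K' * (K.index : ℝ) / (K'.relIndex H : ℝ) ≤
          f K * (K'.index : ℝ) / (K'.relIndex H : ℝ) := by gcongr
      have s5 : f K * (K'.index : ℝ) / (K'.relIndex H : ℝ) = f K * (H.index : ℝ) := by
        rw [← hidx2]; field_simp
      have s2 : f K' / (K'.relIndex H : ℝ) * (K.index : ℝ)
          = f K' * (K.index : ℝ) / (K'.relIndex H : ℝ) := by ring
      linarith [s1, s4, s5, s2.le, s2.ge]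
    have : sInf A / (H.index : ℝ) ≤ sInf B := le_csInf hBne key
    rw [div_le_iff₀ hHpos] at this
    linarith [this]
  · -- H.index * sInf B ≤ sInf A
    apply le_csInf hAne
    rintro x ⟨K, hle, hrelne, rfl⟩
    have hKidx : K.index = K.relIndex H * H.index :=
      (Subgroup.relIndex_mul_index hle).symm
    have hKne : K.index ≠ 0 := by rw [hKidx]; exact mul_ne_zero hrelne hH
    have hmem : f K / (K.index : ℝ) ∈ B := ⟨K, hKne, rfl⟩
    have h1 : sInf B ≤ f K / (K.index : ℝ) := csInf_le hBbdd hmem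
    have : (H.index : ℝ) * sInf B ≤ (H.index : ℝ) * (f K / (K.index : ℝ)) :=
      mul_le_mul_of_nonneg_left h1 hHpos.le
    refine this.trans (le_of_eq ?_)
    have hrelpos : (0 : ℝ) < (K.relIndex H : ℝ) := by positivity
    have hKpos : (0 : ℝ) < (K.index : ℝ) := by positivity
    have : (K.index : ℝ) = (K.relIndex H : ℝ) * (H.index : ℝ) := by
      rw [← Nat.cast_mul, ← hKidx]
    field_simp [this]
    rw [this]; ring
end

section
/- If G is a group generated by r elements and H is a subgroup of finite index n in G, then H can be generated by n·(r−1)+1 elements. -/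
open Subgroup Pointwise
open scoped Classical

namespace NSAux

variable {G : Type*} [Group G] (H : Subgroup G) (S : Finset G)

/-- The symmetric alphabet. -/
def A : Set G := (S : Set G) ∪ (S : Set G)⁻¹

/-- Right-coset space. -/
abbrev Q (H : Subgroup G) := Quotient (QuotientGroup.rightRel H)

def mk : G → Q H := Quotient.mk''

lemma mk_eq_mk {x y : G} : mk H x = mk H y ↔ y * x⁻¹ ∈ H :=
  Quotient.eq''.trans QuotientGroup.rightRel_apply

lemma mk_mul_right {x y : G} (h : mk H x = mk H y) (a : G) :
    mk H (x * a) = mk H (y * a) := by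
  rw [mk_eq_mk] at h ⊢
  simpa [mul_assoc, mul_inv_rev] using h

variable (hS : Subgroup.closure (S : Set G) = ⊤)
include hS

lemma exists_word (c : Q H) :
    ∃ k : ℕ, ∃ l : List G, (∀ x ∈ l, x ∈ A S) ∧ l.length = k ∧ mk H l.prod = c := by
  induction c using Quotient.inductionOn' with
  | h g =>
    have hg : g ∈ Subgroup.closure (S : Set G) := hS ▸ Subgroup.mem_top g
    have hg' : g ∈ Submonoid.closure (A S) := by
      have := Subgroup.closure_toSubmonoid (S : Set G)
      rw [← Subgroup.mem_toSubmonoid, this] at hg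
      exact hg
    obtain ⟨l, hl, hlp⟩ := Submonoid.exists_list_of_mem_closure hg'
    exact ⟨l.length, l, hl, rfl, by rw [hlp]; rfl⟩

noncomputable def d (c : Q H) : ℕ := Nat.find (exists_word H S hS c)

noncomputable def wrd (c : Q H) : List G := (Nat.find_spec (exists_word H S hS c)).choose

lemma wrd_spec (c : Q H) :
    (∀ x ∈ wrd H S hS c, x ∈ A S) ∧ (wrd H S hS c).length = d H S hS c ∧
      mk H (wrd H S hS c).prod = c :=
  (Nat.find_spec (exists_word H S hS c)).choose_spec

lemma d_base : d H S hS (mk H 1) = 0 :=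
  Nat.eq_zero_of_le_zero (Nat.find_le ⟨[], by simp, rfl, by simp⟩)

lemma eq_base_of_d_eq_zero {c : Q H} (h : d H S hS c = 0) : c = mk H 1 := by
  obtain ⟨-, hlen, hprod⟩ := wrd_spec H S hS c
  rw [h, List.length_eq_zero_iff] at hlen
  rw [← hprod, hlen]
  simp

noncomputable def parent (c : Q H) : Q H := mk H (wrd H S hS c).dropLast.prod

noncomputable def letter (c : Q H) : G := ((wrd H S hS c).getLast?).getD 1

lemma wrd_ne_nil {c : Q H} (h : d H S hS c ≠ 0) : wrd H S hS c ≠ [] := by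
  intro hnil
  obtain ⟨-, hlen, -⟩ := wrd_spec H S hS c
  rw [hnil] at hlen
  simp at hlen
  exact h hlen.symm

lemma letter_mem {c : Q H} (h : d H S hS c ≠ 0) : letter H S hS c ∈ A S := by
  obtain ⟨hmem, -, -⟩ := wrd_spec H S hS c
  have hne := wrd_ne_nil H S hS h
  rw [letter, List.getLast?_eq_getLast hne]
  exact hmem _ (List.getLast_mem hne)

lemma parent_mul_letter {c : Q H} (h : d H S hS c ≠ 0) :
    (wrd H S hS c).dropLast.prod * letter H S hS c = (wrd H S hS c).prod := by
  have hne := wrd_ne_nil H S hS h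
  rw [letter, List.getLast?_eq_getLast hne]
  conv_rhs => rw [← List.dropLast_append_getLast hne]
  rw [List.prod_append, List.prod_singleton]
  simp

lemma d_parent_lt {c : Q H} (h : d H S hS c ≠ 0) :
    d H S hS (parent H S hS c) < d H S hS c := by
  obtain ⟨hmem, hlen, -⟩ := wrd_spec H S hS c
  have hne := wrd_ne_nil H S hS h
  have hle : d H S hS (parent H S hS c) ≤ (wrd H S hS c).dropLast.length :=
    Nat.find_le ⟨(wrd H S hS c).dropLast,
      fun x hx => hmem x ((List.dropLast_sublist _).subset hx), rfl, rfl⟩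
  have : (wrd H S hS c).dropLast.length = d H S hS c - 1 := by
    rw [List.length_dropLast, hlen]
  omega

noncomputable def rep (c : Q H) : G :=
  if h : d H S hS c = 0 then 1 else rep (parent H S hS c) * letter H S hS c
termination_by d H S hS c
decreasing_by exact d_parent_lt H S hS h

lemma rep_of_d_eq_zero {c : Q H} (h : d H S hS c = 0) : rep H S hS c = 1 := by
  rw [rep, dif_pos h]

lemma rep_spec {c : Q H} (h : d H S hS c ≠ 0) :
    rep H S hS c = rep H S hS (parent H S hS c) * letter H S hS c := by
  rw [rep, dif_neg h]

lemma mk_rep (c : Q H) : mk H (rep H S hS c) = c := by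
  suffices h : ∀ k c, d H S hS c = k → mk H (rep H S hS c) = c from h _ c rfl
  intro k
  induction k using Nat.strong_induction_on with
  | _ k ih =>
    intro c hc
    by_cases h : d H S hS c = 0
    · rw [rep_of_d_eq_zero H S hS h, eq_base_of_d_eq_zero H S hS h]
    · obtain ⟨-, -, hprod⟩ := wrd_spec H S hS c
      have hp : mk H (rep H S hS (parent H S hS c)) = parent H S hS c :=
        ih _ (hc ▸ d_parent_lt H S hS h) _ rfl
      rw [rep_spec H S hS h]
      calc mk H (rep H S hS (parent H S hS c) * letter H S hS c)
          = mk H ((wrd H S hS c).dropLast.prod * letter H S hS c) :=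
            mk_mul_right H hp _
        _ = c := by rw [parent_mul_letter H S hS h, hprod]

lemma rep_injective : Function.Injective (rep H S hS) := by
  intro a b hab
  rw [← mk_rep H S hS a, ← mk_rep H S hS b, hab]

lemma rep_base : rep H S hS (mk H 1) = 1 :=
  rep_of_d_eq_zero H S hS (d_base H S hS)

end NSAux

open Subgroup Pointwise
open scoped Classical

/-- Nielsen–Schreier / Reidemeister–Schreier rank bound: if `G` is generated by `r` elements
and `H ≤ G` has finite index `n`, then `H` can be generated by `n*(r-1)+1` elements. -/
theorem subgroup_rank_bound {G : Type*} [Group G] (r n : ℕ)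
    (S : Finset G) (hS : Subgroup.closure (S : Set G) = ⊤) (hr : S.card = r)
    (H : Subgroup G) (hn : H.index = n) (hfin : n ≠ 0) :
    ∃ T : Finset H, Subgroup.closure (T : Set H) = ⊤ ∧ T.card ≤ n * (r - 1) + 1 := by
  classical
  haveI : H.FiniteIndex := ⟨by rw [hn]; exact hfin⟩
  haveI := H.fintypeQuotientOfFiniteIndex
  haveI : Fintype (NSAux.Q H) :=
    Fintype.ofEquiv _ (QuotientGroup.quotientRightRelEquivQuotientLeftRel H).symm
  set rep : NSAux.Q H → G := NSAux.rep H S hS with hrep_def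
  set R : Finset G := Finset.image rep Finset.univ with hR_def
  have hrepinj : Function.Injective rep := NSAux.rep_injective H S hS
  have hcardQ : Fintype.card (NSAux.Q H) = n := by
    rw [Fintype.card_congr (QuotientGroup.quotientRightRelEquivQuotientLeftRel H), ← hn,
      Subgroup.index_eq_card, Nat.card_eq_fintype_card]
  have hcardR : R.card = n := by
    rw [hR_def, Finset.card_image_of_injective _ hrepinj, Finset.card_univ, hcardQ]
  have hmemR : ∀ c, rep c ∈ R := fun c => Finset.mem_image_of_mem _ (Finset.mem_univ c)
  have hR1 : (1 : G) ∈ R := by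
    have := NSAux.rep_base H S hS
    rw [← this]; exact hmemR _
  have hmkrep : ∀ c, NSAux.mk H (rep c) = c := NSAux.mk_rep H S hS
  -- R is a right transversal
  have hR : Subgroup.IsComplement (H : Set G) (R : Set G) := by
    rw [Subgroup.isComplement_iff_existsUnique_mul_inv_mem]
    intro g
    refine ⟨⟨rep (NSAux.mk H g), by exact_mod_cast hmemR _⟩, ?_, ?_⟩
    · exact (NSAux.mk_eq_mk H).mp (hmkrep (NSAux.mk H g))
    · rintro ⟨s, hs⟩ hs'
      have h1 : NSAux.mk H s = NSAux.mk H g := (NSAux.mk_eq_mk H).mpr hs'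
      have hs'' : s ∈ R := by exact_mod_cast hs
      obtain ⟨c, -, rfl⟩ := Finset.mem_image.mp hs''
      refine Subtype.ext ?_
      show rep c = rep (NSAux.mk H g)
      rw [← h1, hmkrep c]
  set φ := Subgroup.IsComplement.toRightFun hR with hφ_def
  have hφR : ∀ g ∈ R, (φ g : G) = g := by
    intro g hg
    have huniq := Subgroup.isComplement_iff_existsUnique_mul_inv_mem.mp hR g
    have h1 : φ g = (⟨g, by exact_mod_cast hg⟩ : (R : Set G)) :=
      huniq.unique (Subgroup.IsComplement.mul_inv_toRightFun_mem hR g)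
        (by simpa using H.one_mem)
    rw [h1]
  set ν : G → H := fun g => ⟨g * (φ g : G)⁻¹,
    Subgroup.IsComplement.mul_inv_toRightFun_mem hR g⟩ with hν_def
  set T₀ : Finset H := (R * S).image ν with hT₀_def
  have hT₀ : Subgroup.closure (T₀ : Set H) = ⊤ :=
    Subgroup.closure_mul_image_eq_top' hR hR1 hS
  have hν1 : ∀ g ∈ R, ν g = 1 := by
    intro g hg
    refine Subtype.ext ?_
    show g * (φ g : G)⁻¹ = 1
    rw [hφR g hg, mul_inv_cancel]
  refine ⟨T₀.erase 1, ?_, ?_⟩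
  · -- closure of the erased set is still everything
    rw [eq_top_iff, ← hT₀]
    have hsub : (T₀ : Set H) ⊆ insert (1 : H) (T₀.erase 1 : Finset H) := by
      intro x hx
      by_cases hx1 : x = 1
      · exact hx1 ▸ Set.mem_insert _ _
      · exact Set.mem_insert_of_mem _ (by
          exact_mod_cast Finset.mem_erase.mpr ⟨hx1, by exact_mod_cast hx⟩)
    refine (Subgroup.closure_mono hsub).trans (le_of_eq ?_)
    refine le_antisymm (Subgroup.closure_le _ |>.mpr ?_) (Subgroup.closure_mono (Set.subset_insert _ _))
    rintro x (rfl | hx)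
    · exact Subgroup.one_mem _
    · exact Subgroup.subset_closure hx
  · -- the cardinality bound
    set P₁ : Finset (G × G) := (R ×ˢ S).filter (fun p => p.1 * p.2 ∈ R) with hP₁_def
    set P₂ : Finset (G × G) := (R ×ˢ S).filter (fun p => ¬ p.1 * p.2 ∈ R) with hP₂_def
    -- (i) generators come from non-transversal products
    have h_i : (T₀.erase 1).card ≤ ((R * S) \ R).card := by
      have hsub : T₀.erase 1 ⊆ ((R * S) \ R).image ν := by
        intro x hx
        obtain ⟨hx1, hx2⟩ := Finset.mem_erase.mp hx
        obtain ⟨g, hg, rfl⟩ := Finset.mem_image.mp hx2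
        exact Finset.mem_image.mpr ⟨g, Finset.mem_sdiff.mpr ⟨hg, fun hgR => hx1 (hν1 g hgR)⟩, rfl⟩
      exact le_trans (Finset.card_le_card hsub) Finset.card_image_le
    -- (ii) non-transversal products come from P₂
    have h_ii : ((R * S) \ R).card ≤ P₂.card := by
      have hsub : (R * S) \ R ⊆ P₂.image (fun p => p.1 * p.2) := by
        intro x hx
        obtain ⟨hx1, hx2⟩ := Finset.mem_sdiff.mp hx
        obtain ⟨a, ha, b, hb, rfl⟩ := Finset.mem_mul.mp hx1
        refine Finset.mem_image.mpr ⟨(a, b), ?_, rfl⟩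
        exact Finset.mem_filter.mpr ⟨Finset.mem_product.mpr ⟨ha, hb⟩, hx2⟩
      exact le_trans (Finset.card_le_card hsub) Finset.card_image_le
    -- (iii) total pair count
    have h_iii : P₁.card + P₂.card = n * r := by
      rw [hP₁_def, hP₂_def, Finset.card_filter_add_card_filter_not,
        Finset.card_product, hcardR, hr]
    -- (iv) at least n - 1 trivial pairs
    have h_iv : n - 1 ≤ P₁.card := by
      set C : Finset (NSAux.Q H) := Finset.univ.filter (fun c => ¬ NSAux.d H S hS c = 0)
        with hC_def
      have hCcard : C.card = n - 1 := by
        have h0 : Finset.univ.filter (fun c => NSAux.d H S hS c = 0) = {NSAux.mk H 1} := by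
          ext c
          simp only [Finset.mem_filter, Finset.mem_univ, true_and, Finset.mem_singleton]
          constructor
          · exact NSAux.eq_base_of_d_eq_zero H S hS
          · rintro rfl; exact NSAux.d_base H S hS
        rw [hC_def, Finset.filter_not, h0, Finset.card_sdiff_of_subset (Finset.subset_univ _),
          Finset.card_univ, hcardQ, Finset.card_singleton]
      rw [← hCcard]
      set ψ : NSAux.Q H → G × G := fun c =>
        if NSAux.letter H S hS c ∈ S then (rep (NSAux.parent H S hS c), NSAux.letter H S hS c)
        else (rep c, (NSAux.letter H S hS c)⁻¹) with hψ_def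
      have hletter : ∀ c, ¬ NSAux.d H S hS c = 0 → NSAux.letter H S hS c ∉ S →
          (NSAux.letter H S hS c)⁻¹ ∈ S := by
        intro c hc hcs
        have := NSAux.letter_mem H S hS hc
        rw [NSAux.A, Set.mem_union] at this
        rcases this with h | h
        · exact absurd (by exact_mod_cast h) hcs
        · exact_mod_cast Set.mem_inv.mp h
      have hmaps : ∀ c ∈ C, ψ c ∈ P₁ := by
        intro c hc
        have hc' : ¬ NSAux.d H S hS c = 0 := (Finset.mem_filter.mp hc).2
        have hspec : rep c = rep (NSAux.parent H S hS c) * NSAux.letter H S hS c :=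
          NSAux.rep_spec H S hS hc'
        by_cases hcs : NSAux.letter H S hS c ∈ S
        · rw [hψ_def]; simp only [if_pos hcs]
          refine Finset.mem_filter.mpr ⟨Finset.mem_product.mpr ⟨hmemR _, hcs⟩, ?_⟩
          rw [← hspec]; exact hmemR c
        · rw [hψ_def]; simp only [if_neg hcs]
          refine Finset.mem_filter.mpr ⟨Finset.mem_product.mpr ⟨hmemR _, hletter c hc' hcs⟩, ?_⟩
          have : rep c * (NSAux.letter H S hS c)⁻¹ = rep (NSAux.parent H S hS c) := by
            rw [hspec]; group
          rw [this]; exact hmemR _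
      refine Finset.card_le_card_of_injOn ψ hmaps ?_
      intro c₁ hc₁ c₂ hc₂ hψeq
      have hc₁' : ¬ NSAux.d H S hS c₁ = 0 := (Finset.mem_filter.mp (Finset.mem_coe.mp hc₁)).2
      have hc₂' : ¬ NSAux.d H S hS c₂ = 0 := (Finset.mem_filter.mp (Finset.mem_coe.mp hc₂)).2
      have hs₁ : rep c₁ = rep (NSAux.parent H S hS c₁) * NSAux.letter H S hS c₁ :=
        NSAux.rep_spec H S hS hc₁'
      have hs₂ : rep c₂ = rep (NSAux.parent H S hS c₂) * NSAux.letter H S hS c₂ :=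
        NSAux.rep_spec H S hS hc₂'
      rw [hψ_def] at hψeq
      simp only at hψeq
      split_ifs at hψeq with h₁ h₂ h₂ <;>
        rw [Prod.mk.injEq] at hψeq <;> obtain ⟨ha, hb⟩ := hψeq
      · -- both letters in S
        apply hrepinj
        rw [hs₁, hs₂, ha, hb]
      · -- c₁ in S, c₂ not
        exfalso
        have e2 : NSAux.parent H S hS c₁ = c₂ := hrepinj ha
        have e1 : rep c₁ = rep (NSAux.parent H S hS c₂) := by
          rw [hs₁, ha, hb, hs₂]; group
        have e3 : c₁ = NSAux.parent H S hS c₂ := hrepinj e1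
        have d1 := NSAux.d_parent_lt H S hS hc₁'
        have d2 := NSAux.d_parent_lt H S hS hc₂'
        rw [e2] at d1
        rw [← e3] at d2
        omega
      · -- c₁ not in S, c₂ in S
        exfalso
        have e2 : c₁ = NSAux.parent H S hS c₂ := hrepinj ha
        have e1 : rep c₂ = rep (NSAux.parent H S hS c₁) := by
          rw [hs₂, ← ha, ← hb, hs₁]; group
        have e3 : c₂ = NSAux.parent H S hS c₁ := hrepinj e1
        have d1 := NSAux.d_parent_lt H S hS hc₁'
        have d2 := NSAux.d_parent_lt H S hS hc₂'
        rw [← e2] at d2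
        rw [← e3] at d1
        omega
      · exact hrepinj ha
    -- combine
    have hfinal : (T₀.erase 1).card ≤ P₂.card := h_i.trans h_ii
    rcases r with - | r'
    · simp only [Nat.mul_zero] at h_iii
      simp only [Nat.zero_sub, Nat.mul_zero]
      omega
    · have hmul : n * (r' + 1) = n * r' + n := by ring
      rw [hmul] at h_iii
      have hgoal : n * (r' + 1 - 1) + 1 = n * r' + 1 := by simp
      rw [hgoal]
      have hn1 : 1 ≤ n := Nat.one_le_iff_ne_zero.mpr hfin
      generalize n * r' = m at h_iii ⊢
      omega
end

section
/- Let G be a finitely generated group and χ an isomorphism-invariant generalised Euler characteristic defined on G and its finite-index subgroups with χ(G) > 0, and suppose there exist constants C, D > 0 with χ(K) ≤ C·r(K) + D for every finite-index subgroup K of G, where r denotes minimal number of generators. If f : G → G is an endomorphism with [G : f(G)] < ∞, then the set of indices { [G : f^k(G)] : k ∈ ℕ } is bounded, and the decreasing chain of images f^k(G) is eventually constant. -/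
/-- Let `G` be a finitely generated group, `χ` an isomorphism-invariant generalised Euler
characteristic on its finite-index subgroups with `χ(G) > 0`, bounded linearly in terms of
numbers of generators (`χ(K) ≤ C·|S| + D` for every finite generating set `S` of a finite-index
subgroup `K`). If `f` is an endomorphism of `G` with image of finite index, then the indices
`[G : f^k(G)]` are bounded and the decreasing chain of images `f^k(G)` is eventually constant. -/
theorem images_eventually_constant {G : Type*} [Group G] [Group.FG G]
    (χ : Subgroup G → ℝ)
    (hmul : ∀ K : Subgroup G, K.index ≠ 0 → χ K = (K.index : ℝ) * χ ⊤)
    (hiso : ∀ H K : Subgroup G, Nonempty (H ≃* K) → χ H = χ K)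
    (hpos : 0 < χ ⊤)
    (C D : ℝ) (hC : 0 < C) (hD : 0 < D)
    (hbound : ∀ K : Subgroup G, K.index ≠ 0 → ∀ S : Finset K,
      Subgroup.closure (S : Set K) = ⊤ → χ K ≤ C * S.card + D)
    (f : Monoid.End G) (hfin : (MonoidHom.range f).index ≠ 0) :
    (∃ B : ℕ, ∀ k : ℕ, (MonoidHom.range (f ^ k)).index ≤ B) ∧
    (∃ N : ℕ, ∀ k : ℕ, N ≤ k → MonoidHom.range (f ^ k) = MonoidHom.range (f ^ N)) := by
  -- the (k+1)-st image as a map of the first image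
  have hsucc : ∀ k : ℕ, MonoidHom.range (f ^ (k + 1)) =
      (MonoidHom.range f).map (f ^ k : Monoid.End G) := by
    intro k
    have : (f ^ (k + 1) : Monoid.End G) = ((f ^ k : Monoid.End G) : G →* G).comp f := by
      rw [pow_succ]; rfl
    rw [this]; exact MonoidHom.range_comp _ _
  -- all images have finite index
  have hidx : ∀ k : ℕ, (MonoidHom.range (f ^ k)).index ≠ 0 := by
    intro k
    induction k with
    | zero =>
      have h0 : MonoidHom.range (f ^ 0) = ⊤ := by
        exact MonoidHom.range_eq_top_of_surjective _ fun x => ⟨x, (DFunLike.congr_fun (show (f ^ 0 : Monoid.End G) = 1 from pow_zero f) x).trans rfl⟩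
      exact fun h => one_ne_zero ((Subgroup.index_eq_one.mpr h0).symm.trans h)
    | succ k ih =>
      rw [hsucc k]
      intro h0
      have hm := (Subgroup.index_map (MonoidHom.range f) ((f ^ k : Monoid.End G) : G →* G)).symm.trans h0
      refine mul_ne_zero (fun h => ?_) ih hm
      exact hfin (Nat.eq_zero_of_zero_dvd
        (h ▸ Subgroup.index_dvd_of_le (le_sup_left :
          MonoidHom.range f ≤ MonoidHom.range f ⊔ ((f ^ k : Monoid.End G) : G →* G).ker)))
  -- the chain of images is antitone
  have hanti : ∀ k l : ℕ, k ≤ l → MonoidHom.range (f ^ l) ≤ MonoidHom.range (f ^ k) := by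
    intro k l hkl
    induction hkl with
    | refl => exact le_rfl
    | step h ih => exact le_trans (by rw [hsucc]; exact Subgroup.map_le_range _ _) ih
  -- bound on the indices
  set n : ℕ := Group.rank G with hn
  have hBR : ∀ k : ℕ, ((MonoidHom.range (f ^ k)).index : ℝ) ≤ (C * n + D) / χ ⊤ := by
    intro k
    set K : Subgroup G := MonoidHom.range (f ^ k) with hK
    obtain ⟨S, hScard, hStop⟩ := Group.rank_spec K
    have hrank : Group.rank K ≤ n := Group.rank_range_le (f := (f ^ k : Monoid.End G))
    have h1 : χ K ≤ C * S.card + D := hbound K (hidx k) S hStop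
    have h2 : (S.card : ℝ) ≤ (n : ℝ) := by
      exact_mod_cast hScard ▸ hrank
    have h3 : χ K ≤ C * n + D := h1.trans (by nlinarith)
    rw [hmul K (hidx k)] at h3
    rw [le_div_iff₀ hpos]
    exact h3
  set B : ℕ := Nat.ceil ((C * n + D) / χ ⊤) with hB
  have hBnat : ∀ k : ℕ, (MonoidHom.range (f ^ k)).index ≤ B := by
    intro k
    exact_mod_cast Nat.cast_le.mp (((hBR k).trans (Nat.le_ceil _)).trans_eq (by norm_num [hB]))
  refine ⟨⟨B, hBnat⟩, ?_⟩
  -- eventual constancy: take an argmax of the index sequence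
  set g : ℕ → ℕ := fun k => (MonoidHom.range (f ^ k)).index with hg
  have hbdd : BddAbove (Set.range g) := ⟨B, by rintro x ⟨k, rfl⟩; exact hBnat k⟩
  have hmem : sSup (Set.range g) ∈ Set.range g :=
    Nat.sSup_mem (Set.range_nonempty g) hbdd
  obtain ⟨N, hN⟩ := hmem
  refine ⟨N, fun k hk => ?_⟩
  have hle : MonoidHom.range (f ^ k) ≤ MonoidHom.range (f ^ N) := hanti N k hk
  -- indices agree
  have h1 : g N ≤ g k := Nat.le_of_dvd (Nat.pos_of_ne_zero (hidx k))
    (Subgroup.index_dvd_of_le hle)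
  have h2 : g k ≤ g N := hN ▸ le_csSup hbdd ⟨k, rfl⟩
  have heq : g k = g N := le_antisymm h2 h1
  -- conclude subgroup equality from equal finite indices
  have hrel : (MonoidHom.range (f ^ k)).relIndex (MonoidHom.range (f ^ N)) = 1 := by
    have := Subgroup.relIndex_mul_index hle
    have hgk : g k = (MonoidHom.range (f ^ k)).index := rfl
    rw [heq] at hgk
    nlinarith [Nat.pos_of_ne_zero (hidx N), this, hgk.symm]
  exact le_antisymm hle (Subgroup.relIndex_eq_one.mp hrel)
end
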